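/- arXiv:1504.06898 — 7 statements merged into one kernel-verified Lean document; each statement's English description precedes it below -/
import Mathlib

section
/- (Huber; Lemma 1(i)) For every ε ∈ (0,1) and every measurable set A ⊆ Ψ, the upper posterior probability over all ε-contaminations of the marginal prior satisfies Π^{upper}(A|x) = (Π(A|x) + ε* r(A)) / (1 + ε* r(A)). -/
open MeasureTheory Set

variable {Ω : Type*} [MeasurableSpace Ω]

/-- The posterior probability of a set `A` when the prior is `μ` and the likelihood
(conditional prior predictive density `ψ ↦ m(x|ψ)`) is `f`. -/
noncomputable def postProb (f : Ω → ℝ) (μ : Measure Ω) (A : Set Ω) : ℝ :=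
  (∫ ψ in A, f ψ ∂μ) / (∫ ψ, f ψ ∂μ)

/-- The ε-contaminated prior `(1−ε)P + εQ`. -/
noncomputable def contam (P Q : Measure Ω) (ε : ℝ) : Measure Ω :=
  ENNReal.ofReal (1 - ε) • P + ENNReal.ofReal ε • Q

/-- `r(A) = sup_{ψ ∈ A} f(ψ) / m` (equal to `0` when `A = ∅` since `Real.sSup ∅ = 0`). -/
noncomputable def rSup (f : Ω → ℝ) (P : Measure Ω) (A : Set Ω) : ℝ :=
  sSup (f '' A) / ∫ ψ, f ψ ∂P

/-- The upper posterior probability over all ε-contaminations. -/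
noncomputable def upperPost (f : Ω → ℝ) (P : Measure Ω) (ε : ℝ) (A : Set Ω) : ℝ :=
  ⨆ Q : ProbabilityMeasure Ω, postProb f (contam P (Q : Measure Ω) ε) A

/-!
A contamination `Q` gives the posterior `(a + ε t) / (b + ε u)`, where `a = (1 - ε) ∫_A f dΠ ≤ b = (1 - ε) m`,
`u = ∫ f dQ` and `t = ∫_A f dQ ≤ min u s` with `s = sup_A f`. Since `a ≤ b`, this is at most
`g t = (a + ε t) / (b + ε t)`, and `g` increases, so it is at most `g s`. Conversely the Dirac contamination
at `ψ ∈ A` attains `g (f ψ)`, and `g` is continuous at `s`, so these values approach `g s`.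
-/

lemma integral_contam {f : Ω → ℝ} {P Q : Measure Ω} {ε : ℝ} (hε0 : 0 ≤ ε) (hε1 : ε ≤ 1)
    (hP : Integrable f P) (hQ : Integrable f Q) :
    ∫ ψ, f ψ ∂(contam P Q ε) = (1 - ε) * ∫ ψ, f ψ ∂P + ε * ∫ ψ, f ψ ∂Q := by
  rw [contam, integral_add_measure (hP.smul_measure ENNReal.ofReal_ne_top)
      (hQ.smul_measure ENNReal.ofReal_ne_top), integral_smul_measure, integral_smul_measure,
    ENNReal.toReal_ofReal (by linarith), ENNReal.toReal_ofReal hε0, smul_eq_mul, smul_eq_mul]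

lemma contam_restrict (P Q : Measure Ω) (ε : ℝ) (A : Set Ω) :
    (contam P Q ε).restrict A = contam (P.restrict A) (Q.restrict A) ε := by
  simp only [contam, Measure.restrict_add, Measure.restrict_smul]

lemma postProb_contam {f : Ω → ℝ} {P Q : Measure Ω} {ε : ℝ} (hε0 : 0 ≤ ε) (hε1 : ε ≤ 1)
    (hP : Integrable f P) (hQ : Integrable f Q) (A : Set Ω) :
    postProb f (contam P Q ε) A =
      ((1 - ε) * ∫ ψ in A, f ψ ∂P + ε * ∫ ψ in A, f ψ ∂Q) /
        ((1 - ε) * ∫ ψ, f ψ ∂P + ε * ∫ ψ, f ψ ∂Q) := by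
  rw [postProb, contam_restrict, integral_contam hε0 hε1 hP.restrict hQ.restrict,
    integral_contam hε0 hε1 hP hQ]

lemma postProb_contam_dirac {f : Ω → ℝ} (hf : Measurable f) {P : Measure Ω}
    (hP : Integrable f P) {ε : ℝ} (hε0 : 0 ≤ ε) (hε1 : ε ≤ 1) {A : Set Ω}
    (hA : MeasurableSet A) {ψ : Ω} (hψ : ψ ∈ A) :
    postProb f (contam P (Measure.dirac ψ) ε) A =
      ((1 - ε) * ∫ x in A, f x ∂P + ε * f ψ) / ((1 - ε) * ∫ x, f x ∂P + ε * f ψ) := by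
  classical
  rw [postProb_contam hε0 hε1 hP (integrable_dirac' hf.stronglyMeasurable enorm_lt_top),
    setIntegral_dirac' hf.stronglyMeasurable ψ hA, if_pos hψ,
    integral_dirac' f ψ hf.stronglyMeasurable]

lemma norm_setIntegral_le_of_norm_le_const_of_isProbabilityMeasure {E : Type*}
    [NormedAddCommGroup E] [NormedSpace ℝ E] {μ : Measure Ω} [IsProbabilityMeasure μ]
    {f : Ω → E} {A : Set Ω} {C : ℝ} (hC : 0 ≤ C) (hfC : ∀ x ∈ A, ‖f x‖ ≤ C) :
    ‖∫ x in A, f x ∂μ‖ ≤ C :=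
  calc ‖∫ x in A, f x ∂μ‖ ≤ C * μ.real A :=
        norm_setIntegral_le_of_norm_le_const (measure_lt_top μ A) hfC
    _ ≤ C := mul_le_of_le_one_right hC measureReal_le_one

lemma div_add_mul_le_div_add_mul {a b ε t u s : ℝ} (ha : 0 ≤ a) (hab : a ≤ b) (hb : 0 < b)
    (hε : 0 ≤ ε) (ht : 0 ≤ t) (htu : t ≤ u) (hts : t ≤ s) :
    (a + ε * t) / (b + ε * u) ≤ (a + ε * s) / (b + ε * s) := by
  have hs : 0 ≤ s := ht.trans hts
  calc (a + ε * t) / (b + ε * u) ≤ (a + ε * t) / (b + ε * t) := by gcongr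
    _ ≤ (a + ε * s) / (b + ε * s) := by
      rw [div_le_div_iff₀ (by positivity) (by positivity)]
      nlinarith [mul_nonneg hε (mul_nonneg (sub_nonneg.2 hts) (sub_nonneg.2 hab))]

lemma postProb_contam_le {f : Ω → ℝ} (hf0 : ∀ ψ, 0 ≤ f ψ) {P Q : Measure Ω}
    [IsProbabilityMeasure Q] (hP : Integrable f P) (hQ : Integrable f Q)
    (hm : 0 < ∫ ψ, f ψ ∂P) {ε : ℝ} (hε0 : 0 ≤ ε) (hε1 : ε < 1) {A : Set Ω} {s : ℝ}
    (hs : 0 ≤ s) (hfs : ∀ ψ ∈ A, f ψ ≤ s) :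
    postProb f (contam P Q ε) A ≤
      ((1 - ε) * ∫ ψ in A, f ψ ∂P + ε * s) / ((1 - ε) * ∫ ψ, f ψ ∂P + ε * s) := by
  have h1ε : 0 < 1 - ε := by linarith
  have hts : ∫ ψ in A, f ψ ∂Q ≤ s :=
    (le_abs_self _).trans <| norm_setIntegral_le_of_norm_le_const_of_isProbabilityMeasure hs
      fun ψ hψ => (Real.norm_of_nonneg (hf0 ψ)).trans_le (hfs ψ hψ)
  have hAP : ∫ ψ in A, f ψ ∂P ≤ ∫ ψ, f ψ ∂P := setIntegral_le_integral hP (ae_of_all _ hf0)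
  have hAQ : ∫ ψ in A, f ψ ∂Q ≤ ∫ ψ, f ψ ∂Q := setIntegral_le_integral hQ (ae_of_all _ hf0)
  rw [postProb_contam hε0 hε1.le hP hQ]
  exact div_add_mul_le_div_add_mul
    (mul_nonneg h1ε.le (integral_nonneg fun ψ => hf0 ψ))
    (mul_le_mul_of_nonneg_left hAP h1ε.le) (mul_pos h1ε hm) hε0
    (integral_nonneg fun ψ => hf0 ψ) hAQ hts

lemma le_of_continuousAt_csSup {S : Set ℝ} (hS : S.Nonempty) (hSb : BddAbove S) {g : ℝ → ℝ}
    (hg : ContinuousAt g (sSup S)) {c : ℝ} (h : ∀ t ∈ S, g t ≤ c) : g (sSup S) ≤ c :=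
  closure_minimal (image_subset_iff.2 h : g '' S ⊆ Iic c) isClosed_Iic
    (hg.continuousWithinAt.mem_closure_image (csSup_mem_closure hS hSb))

/-- Huber's Lemma 1 (i): Π^{upper}(A|x) = (Π(A|x) + ε* r(A)) / (1 + ε* r(A)). -/
theorem upperPost_eq
    (f : Ω → ℝ) (hf : Measurable f) (hf0 : ∀ ψ, 0 ≤ f ψ)
    (C : ℝ) (hfC : ∀ ψ, f ψ ≤ C)
    (P : Measure Ω) [IsProbabilityMeasure P]
    (hm : 0 < ∫ ψ, f ψ ∂P)
    (ε : ℝ) (hε : ε ∈ Set.Ioo (0 : ℝ) 1)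
    (A : Set Ω) (hA : MeasurableSet A) :
    upperPost f P ε A =
      (postProb f P A + (ε / (1 - ε)) * rSup f P A) /
        (1 + (ε / (1 - ε)) * rSup f P A) := by
  obtain ⟨hε0, hε1⟩ := hε
  rcases A.eq_empty_or_nonempty with rfl | hAne
  · simp [upperPost, postProb, rSup]
  have hint (μ : Measure Ω) [IsFiniteMeasure μ] : Integrable f μ :=
    .of_bound hf.aestronglyMeasurable C
      (ae_of_all _ fun ψ => (Real.norm_of_nonneg (hf0 ψ)).trans_le (hfC ψ))
  have hbdd : BddAbove (f '' A) := ⟨C, forall_mem_image.2 fun ψ _ => hfC ψ⟩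
  have hs : 0 ≤ sSup (f '' A) := Real.sSup_nonneg (forall_mem_image.2 fun ψ _ => hf0 ψ)
  have hD : 0 < (1 - ε) * ∫ ψ, f ψ ∂P + ε * sSup (f '' A) := by nlinarith
  let g (t : ℝ) : ℝ := ((1 - ε) * ∫ ψ in A, f ψ ∂P + ε * t) / ((1 - ε) * ∫ ψ, f ψ ∂P + ε * t)
  have hupper (Q : ProbabilityMeasure Ω) :
      postProb f (contam P (Q : Measure Ω) ε) A ≤ g (sSup (f '' A)) :=
    postProb_contam_le hf0 (hint P) (hint Q) hm hε0.le hε1 hs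
      fun ψ hψ => le_csSup hbdd (mem_image_of_mem f hψ)
  have hlower : g (sSup (f '' A)) ≤ upperPost f P ε A := by
    refine le_of_continuousAt_csSup (hAne.image f) hbdd ?_ (forall_mem_image.2 fun ψ hψ => ?_)
    · fun_prop (disch := exact hD.ne')
    · exact (postProb_contam_dirac hf (hint P) hε0.le hε1.le hA hψ).ge.trans
        (le_ciSup ⟨_, forall_mem_range.2 hupper⟩ ⟨Measure.dirac ψ, inferInstance⟩)
  have : Nonempty (ProbabilityMeasure Ω) := ⟨⟨Measure.dirac hAne.some, inferInstance⟩⟩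
  rw [upperPost, le_antisymm (ciSup_le hupper) hlower, postProb, rSup]
  simp only [g]
  field_simp
end

section
/- (Proposition 3) Fix ψ_0 ∈ Ψ and let A_0 := {ψ : f(ψ) ≤ f(ψ_0)} (the event that RB_ε(ψ) ≤ RB_ε(ψ_0), which is the same set for every ε since RB_ε is a positive multiple of f). Then the Gâteaux derivative of the strength of the evidence at the base marginal prior Π in the direction Q exists and equals lim_{ε→0} (S_ε − S_0)/ε = (m_Q/m)(Q(A_0|x) − Π(A_0|x)), where S_ε := (∫_{A_0} f dΠ_ε)/(∫_Ψ f dΠ_ε) is the posterior probability of A_0 under Π_ε, Π(A_0|x) := (∫_{A_0} f dΠ)/m and Q(A_0|x) := (∫_{A_0} f dQ)/m_Q. -/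
open MeasureTheory Set Filter Topology

/-! The posterior probability `S_ε` of a fixed event is a quotient of two functions affine in
`ε`, so its Gâteaux derivative is the derivative at `0` of such a quotient, given by the
quotient rule; the integrals play the role of constants. -/

theorem hasDerivAt_lineMap_div_lineMap (a b m n : ℝ) (hm : m ≠ 0) :
    HasDerivAt (fun ε : ℝ => ((1 - ε) * a + ε * b) / ((1 - ε) * m + ε * n))
      ((m * b - a * n) / m ^ 2) 0 := by
  have hlin : ∀ c d : ℝ, HasDerivAt (fun ε : ℝ => (1 - ε) * c + ε * d) (d - c) 0 := fun c d =>
    ((((hasDerivAt_id' (0 : ℝ)).const_sub 1).mul_const c).add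
      ((hasDerivAt_id' (0 : ℝ)).mul_const d)).congr_deriv (by ring)
  refine ((hlin a b).div (hlin m n) (by simpa using hm)).congr_deriv ?_
  simp only [sub_zero, one_mul, zero_mul, add_zero]
  field_simp
  ring

theorem gateaux_strength_marginal_general
    {Ω : Type*} [MeasurableSpace Ω]
    (P Q : Measure Ω)
    (f : Ω → ℝ)
    (hm : 0 < ∫ x, f x ∂P) (hmQ : 0 < ∫ x, f x ∂Q)
    (ψ0 : Ω) :
    Tendsto (fun ε : ℝ =>
        (((1 - ε) * (∫ x in {ψ | f ψ ≤ f ψ0}, f x ∂P) +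
              ε * (∫ x in {ψ | f ψ ≤ f ψ0}, f x ∂Q)) /
            ((1 - ε) * (∫ x, f x ∂P) + ε * (∫ x, f x ∂Q)) -
          (∫ x in {ψ | f ψ ≤ f ψ0}, f x ∂P) / ∫ x, f x ∂P) / ε)
      (𝓝[≠] 0)
      (𝓝 (((∫ x, f x ∂Q) / ∫ x, f x ∂P) *
        ((∫ x in {ψ | f ψ ≤ f ψ0}, f x ∂Q) / (∫ x, f x ∂Q) -
          (∫ x in {ψ | f ψ ≤ f ψ0}, f x ∂P) / ∫ x, f x ∂P))) := by
  set a := ∫ x in {ψ | f ψ ≤ f ψ0}, f x ∂P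
  set b := ∫ x in {ψ | f ψ ≤ f ψ0}, f x ∂Q
  set m := ∫ x, f x ∂P
  set mQ := ∫ x, f x ∂Q
  have hlimit : mQ / m * (b / mQ - a / m) = (m * b - a * mQ) / m ^ 2 := by
    field_simp
  rw [hlimit]
  convert (hasDerivAt_lineMap_div_lineMap a b m mQ hm.ne').tendsto_slope_zero using 2 with ε
  simp only [zero_add, sub_zero, one_mul, zero_mul, add_zero, smul_eq_mul]
  ring

/-- Proposition 3: for `A₀ = {ψ : f(ψ) ≤ f(ψ₀)}` (the event `RB_ε(ψ) ≤ RB_ε(ψ₀)`, the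
same set for every ε), the Gâteaux derivative of the strength of the evidence at the
base marginal prior `Π` in the direction `Q` exists and equals
`lim_{ε→0} (S_ε − S₀)/ε = (m_Q/m)(Q(A₀|x) − Π(A₀|x))`, where
`S_ε = (∫_{A₀} f dΠ_ε)/(∫ f dΠ_ε) = ((1−ε)∫_{A₀} f dΠ + ε∫_{A₀} f dQ)/((1−ε)m + εm_Q)`
is the posterior probability of `A₀` under `Π_ε = (1−ε)Π + εQ`. -/
theorem gateaux_strength_marginal
    {Ω : Type*} [MeasurableSpace Ω]
    (P Q : Measure Ω) [IsProbabilityMeasure P] [IsProbabilityMeasure Q]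
    (f : Ω → ℝ) (hf : Measurable f) (hf0 : ∀ ψ, 0 ≤ f ψ)
    (C : ℝ) (hfC : ∀ ψ, f ψ ≤ C)
    (hm : 0 < ∫ x, f x ∂P) (hmQ : 0 < ∫ x, f x ∂Q)
    (ψ0 : Ω) :
    Tendsto (fun ε : ℝ =>
        (((1 - ε) * (∫ x in {ψ | f ψ ≤ f ψ0}, f x ∂P) +
              ε * (∫ x in {ψ | f ψ ≤ f ψ0}, f x ∂Q)) /
            ((1 - ε) * (∫ x, f x ∂P) + ε * (∫ x, f x ∂Q)) -
          (∫ x in {ψ | f ψ ≤ f ψ0}, f x ∂P) / ∫ x, f x ∂P) / ε)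
      (𝓝[≠] 0)
      (𝓝 (((∫ x, f x ∂Q) / ∫ x, f x ∂P) *
        ((∫ x in {ψ | f ψ ≤ f ψ0}, f x ∂Q) / (∫ x, f x ∂Q) -
          (∫ x in {ψ | f ψ ≤ f ψ0}, f x ∂P) / ∫ x, f x ∂P))) :=
  gateaux_strength_marginal_general P Q f hm hmQ ψ0
end

section
/- (Proposition 4) For every ψ_0 ∈ Ψ, the Gâteaux derivative of the posterior density of ψ at the base marginal prior in the direction Q exists and equals lim_{ε→0} (π_ε(ψ_0|x) − π_0(ψ_0|x))/ε = (m_Q/m)(q(ψ_0|x) − π(ψ_0|x)), where π(ψ_0|x) := π(ψ_0)f(ψ_0)/m and q(ψ_0|x) := q(ψ_0)f(ψ_0)/m_Q are the posterior densities under the base and contaminating priors. -/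
open MeasureTheory Filter Topology

/-!
For fixed data, the contaminated posterior density at `ψ₀` is the Möbius function
`ε ↦ ((1 - ε) a + ε b) / ((1 - ε) m + ε m_Q)` with `a = π(ψ₀) f(ψ₀)` and `b = q(ψ₀) f(ψ₀)`,
so the Gâteaux derivative is its ordinary derivative at `0`, namely `(b m - a m_Q) / m²`,
which rearranges to `(m_Q / m) (q(ψ₀|x) - π(ψ₀|x))`.
-/

theorem hasDerivAt_one_sub_mul_add_mul (x u v : ℝ) :
    HasDerivAt (fun ε : ℝ => (1 - ε) * u + ε * v) (v - u) x :=
  ((((hasDerivAt_id' x).const_sub 1).mul_const u).add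
    ((hasDerivAt_id' x).mul_const v)).congr_deriv (by ring)

theorem hasDerivAt_mixture_div_mixture (a b m n : ℝ) (hm : m ≠ 0) :
    HasDerivAt (fun ε : ℝ => ((1 - ε) * a + ε * b) / ((1 - ε) * m + ε * n))
      ((b * m - a * n) / m ^ 2) 0 :=
  ((hasDerivAt_one_sub_mul_add_mul 0 a b).div (hasDerivAt_one_sub_mul_add_mul 0 m n)
    (by simpa using hm)).congr_deriv (by ring)

theorem tendsto_slope_mixture_div_mixture (a b m n : ℝ) (hm : m ≠ 0) :
    Tendsto (fun ε : ℝ => (((1 - ε) * a + ε * b) / ((1 - ε) * m + ε * n) - a / m) / ε)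
      (𝓝[≠] 0) (𝓝 ((b * m - a * n) / m ^ 2)) := by
  convert (hasDerivAt_mixture_div_mixture a b m n hm).tendsto_slope_zero using 2 with ε
  simp [div_eq_inv_mul]

theorem gateaux_posterior_density_general
    {Ω : Type*} [MeasurableSpace Ω] (ν : Measure Ω)
    (p q : Ω → ℝ)
    (f : Ω → ℝ)
    (hm : 0 < ∫ ψ, f ψ * p ψ ∂ν) (hmQ : 0 < ∫ ψ, f ψ * q ψ ∂ν)
    (ψ0 : Ω) :
    Tendsto (fun ε : ℝ =>
        (((1 - ε) * p ψ0 + ε * q ψ0) * f ψ0 /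
            ((1 - ε) * (∫ ψ, f ψ * p ψ ∂ν) + ε * (∫ ψ, f ψ * q ψ ∂ν)) -
          p ψ0 * f ψ0 / ∫ ψ, f ψ * p ψ ∂ν) / ε)
      (𝓝[≠] 0)
      (𝓝 (((∫ ψ, f ψ * q ψ ∂ν) / ∫ ψ, f ψ * p ψ ∂ν) *
        (q ψ0 * f ψ0 / (∫ ψ, f ψ * q ψ ∂ν) -
          p ψ0 * f ψ0 / ∫ ψ, f ψ * p ψ ∂ν))) := by
  set m := ∫ ψ, f ψ * p ψ ∂ν
  set mQ := ∫ ψ, f ψ * q ψ ∂ν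
  have hlimit : mQ / m * (q ψ0 * f ψ0 / mQ - p ψ0 * f ψ0 / m) =
      (q ψ0 * f ψ0 * m - p ψ0 * f ψ0 * mQ) / m ^ 2 := by
    field_simp
  rw [hlimit]
  convert tendsto_slope_mixture_div_mixture (p ψ0 * f ψ0) (q ψ0 * f ψ0) m mQ hm.ne'
    using 2 with ε
  ring

/-- Proposition 4: the Gâteaux derivative of the posterior density of ψ at the base
marginal prior in the direction `Q` exists and equals
`lim_{ε→0} (π_ε(ψ₀|x) − π₀(ψ₀|x))/ε = (m_Q/m)(q(ψ₀|x) − π(ψ₀|x))`, where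
`π_ε(ψ|x) = ((1−ε)π(ψ) + εq(ψ))f(ψ)/((1−ε)m + εm_Q)`,
`π(ψ₀|x) = π(ψ₀)f(ψ₀)/m` and `q(ψ₀|x) = q(ψ₀)f(ψ₀)/m_Q`. -/
theorem gateaux_posterior_density
    {Ω : Type*} [MeasurableSpace Ω] (ν : Measure Ω) [SigmaFinite ν]
    (p q : Ω → ℝ) (hp : Measurable p) (hq : Measurable q)
    (hp0 : ∀ ψ, 0 ≤ p ψ) (hq0 : ∀ ψ, 0 ≤ q ψ)
    (hp1 : ∫ ψ, p ψ ∂ν = 1) (hq1 : ∫ ψ, q ψ ∂ν = 1)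
    (f : Ω → ℝ) (hf : Measurable f) (hf0 : ∀ ψ, 0 ≤ f ψ)
    (C : ℝ) (hfC : ∀ ψ, f ψ ≤ C)
    (hm : 0 < ∫ ψ, f ψ * p ψ ∂ν) (hmQ : 0 < ∫ ψ, f ψ * q ψ ∂ν)
    (ψ0 : Ω) :
    Tendsto (fun ε : ℝ =>
        (((1 - ε) * p ψ0 + ε * q ψ0) * f ψ0 /
            ((1 - ε) * (∫ ψ, f ψ * p ψ ∂ν) + ε * (∫ ψ, f ψ * q ψ ∂ν)) -
          p ψ0 * f ψ0 / ∫ ψ, f ψ * p ψ ∂ν) / ε)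
      (𝓝[≠] 0)
      (𝓝 (((∫ ψ, f ψ * q ψ ∂ν) / ∫ ψ, f ψ * p ψ ∂ν) *
        (q ψ0 * f ψ0 / (∫ ψ, f ψ * q ψ ∂ν) -
          p ψ0 * f ψ0 / ∫ ψ, f ψ * p ψ ∂ν))) :=
  gateaux_posterior_density_general ν p q f hm hmQ ψ0
end

section
/- (Proposition 6, discrete case) Fix ψ_0 ∈ Ψ and define the strength S_ε := Π({ψ : RB_ε(ψ) ≤ RB_ε(ψ_0)} | x), where Π(A|x) := (∫_A f dΠ)/m is the base posterior. Assume the posterior distribution of RB is discrete with support containing no limit points near RB(ψ_0) and no ties interacting with RB_Q, made precise by: (a) there exists δ > 0 with Π({ψ : 0 < |RB(ψ) − RB(ψ_0)| < δ} | x) = 0, and (b) Π({ψ : RB(ψ) = RB(ψ_0) and RB_Q(ψ) ≠ RB_Q(ψ_0)} | x) = 0. Then the Gâteaux derivative of the strength at the base conditional prior in the direction Q is zero: lim_{ε→0} (S_ε − S_0)/ε = 0. -/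
/-!
For `ε` near `0` the strength `S_ε` is constant, so its derivative vanishes. Indeed
`RB_ε(ψ) ≤ RB_ε(ψ₀)` iff `(1 - ε)(f ψ - f ψ₀) + ε (g ψ - g ψ₀) ≤ 0`. Where `f ψ ≠ f ψ₀`,
hypothesis (a) lets us assume `|f ψ - f ψ₀| ≥ δ m`, and a perturbation of size `|ε| C`
cannot change the sign of this expression; where `f ψ = f ψ₀`, hypothesis (b) lets us assume
`g ψ = g ψ₀`, and the expression vanishes. The excluded `ψ` carry no posterior mass.
-/

open MeasureTheory Set Filter Topology

variable {Ω : Type*} [MeasurableSpace Ω]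

/-- The relative belief ratio when the conditional prior is contaminated: the
conditional prior predictive is `f_ε = (1−ε)f + εg` and
`RB_ε(ψ) = f_ε(ψ)/m_ε` with `m_ε = (1−ε)m + εm_Q`. -/
noncomputable def RBc (f g : Ω → ℝ) (P : Measure Ω) (ε : ℝ) (ψ : Ω) : ℝ :=
  ((1 - ε) * f ψ + ε * g ψ) /
    ((1 - ε) * (∫ x, f x ∂P) + ε * (∫ x, g x ∂P))

/-- The strength of the evidence `S_ε = Π({ψ : RB_ε(ψ) ≤ RB_ε(ψ₀)} | x)`, computed
with the base posterior `Π(A|x) = (∫_A f dΠ)/m`. -/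
noncomputable def strength (f g : Ω → ℝ) (P : Measure Ω) (ψ0 : Ω) (ε : ℝ) : ℝ :=
  (∫ x in {ψ | RBc f g P ε ψ ≤ RBc f g P ε ψ0}, f x ∂P) / ∫ x, f x ∂P

theorem one_sub_mul_add_mul_nonpos_iff {a b d C ε : ℝ} (hd : d ≤ |a|) (hb : |b| ≤ C)
    (hε : |ε| ≤ 1 / 2) (hεC : 2 * |ε| * C < d) :
    (1 - ε) * a + ε * b ≤ 0 ↔ a ≤ 0 := by
  have hεb : |ε * b| ≤ |ε| * C := by
    rw [abs_mul]; exact mul_le_mul_of_nonneg_left hb (abs_nonneg ε)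
  obtain ⟨hεb₁, hεb₂⟩ := abs_le.mp hεb
  have h1ε : 1 / 2 ≤ 1 - ε := by linarith [le_abs_self ε]
  rcases le_or_gt a 0 with ha | ha
  · rw [abs_of_nonpos ha] at hd
    exact iff_of_true (by nlinarith) ha
  · rw [abs_of_pos ha] at hd
    exact iff_of_false (by nlinarith) (not_le.mpr ha)

theorem setIntegral_congr_of_ae_ne_zero {α E : Type*} [MeasurableSpace α]
    [NormedAddCommGroup E] [NormedSpace ℝ E] {μ : Measure α} {f : α → E} {s t : Set α}
    (hs : MeasurableSet s) (ht : MeasurableSet t) (h : ∀ᵐ x ∂μ, f x ≠ 0 → (x ∈ s ↔ x ∈ t)) :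
    ∫ x in s, f x ∂μ = ∫ x in t, f x ∂μ := by
  classical
  rw [← integral_indicator hs, ← integral_indicator ht]
  refine integral_congr_ae (h.mono fun x hx => ?_)
  by_cases hfx : f x = 0
  · simp only [indicator_apply, hfx, ite_self]
  · simp only [indicator_apply, hx hfx]

theorem ae_imp_eq_zero_of_setIntegral_eq_zero {α : Type*} [MeasurableSpace α]
    {μ : Measure α} {f : α → ℝ} {s : Set α} (hs : MeasurableSet s) (hf0 : ∀ x, 0 ≤ f x)
    (hf : IntegrableOn f s μ) (h : ∫ x in s, f x ∂μ = 0) :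
    ∀ᵐ x ∂μ, x ∈ s → f x = 0 :=
  (ae_restrict_iff' hs).mp ((setIntegral_eq_zero_iff_of_nonneg_ae (ae_of_all _ hf0) hf).mp h)

section Strength

variable {P : Measure Ω} {f g : Ω → ℝ}

theorem RBc_le_RBc_iff {ε : ℝ} (hmε : 0 < (1 - ε) * (∫ x, f x ∂P) + ε * (∫ x, g x ∂P))
    (ψ ψ0 : Ω) :
    RBc f g P ε ψ ≤ RBc f g P ε ψ0 ↔ (1 - ε) * (f ψ - f ψ0) + ε * (g ψ - g ψ0) ≤ 0 := by
  unfold RBc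
  rw [div_le_div_iff_of_pos_right hmε]
  constructor <;> intro h <;> linarith

theorem RBc_zero_le_RBc_zero_iff (hm : 0 < ∫ x, f x ∂P) (ψ ψ0 : Ω) :
    RBc f g P 0 ψ ≤ RBc f g P 0 ψ0 ↔ f ψ ≤ f ψ0 := by
  simpa [sub_nonpos] using RBc_le_RBc_iff (ε := 0) (by simpa using hm) ψ ψ0

theorem measurable_RBc (hf : Measurable f) (hg : Measurable g) (ε : ℝ) :
    Measurable (RBc f g P ε) := by
  unfold RBc; fun_prop

theorem strength_eventually_eq (hf : Measurable f) (hg : Measurable g)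
    {C : ℝ} (hg0 : ∀ ψ, 0 ≤ g ψ) (hgC : ∀ ψ, g ψ ≤ C) (hm : 0 < ∫ x, f x ∂P)
    {ψ0 : Ω} {d : ℝ} (hd : 0 < d)
    (hgap : ∀ᵐ ψ ∂P, f ψ ≠ 0 → f ψ ≠ f ψ0 → d ≤ |f ψ - f ψ0|)
    (htie : ∀ᵐ ψ ∂P, f ψ ≠ 0 → f ψ = f ψ0 → g ψ = g ψ0) :
    ∀ᶠ ε in 𝓝 0, strength f g P ψ0 ε = strength f g P ψ0 0 := by
  set M := ∫ x, f x ∂P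
  set MQ := ∫ x, g x ∂P
  have habs : Tendsto (fun ε : ℝ => |ε|) (𝓝 0) (𝓝 0) := by
    simpa using continuous_abs.tendsto (0 : ℝ)
  have hmε : ∀ᶠ ε in 𝓝 (0 : ℝ), 0 < (1 - ε) * M + ε * MQ :=
    ((by fun_prop : Continuous fun ε : ℝ => (1 - ε) * M + ε * MQ).tendsto' 0 M
      (by simp)).eventually (lt_mem_nhds hm)
  have hhalf : ∀ᶠ ε in 𝓝 (0 : ℝ), |ε| ≤ 1 / 2 := habs.eventually (ge_mem_nhds (by norm_num))
  have hsmall : ∀ᶠ ε in 𝓝 (0 : ℝ), 2 * |ε| * C < d := by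
    simpa [mul_assoc] using
      ((habs.const_mul 2).mul_const C).eventually (gt_mem_nhds (by simpa using hd))
  filter_upwards [hmε, hhalf, hsmall] with ε hmε hhalf hsmall
  unfold strength
  congr 1
  refine setIntegral_congr_of_ae_ne_zero (measurableSet_le (measurable_RBc hf hg ε)
    measurable_const) (measurableSet_le (measurable_RBc hf hg 0) measurable_const) ?_
  filter_upwards [hgap, htie] with ψ hgap htie hfψ
  simp only [RBc_le_RBc_iff hmε, RBc_zero_le_RBc_zero_iff hm]
  by_cases hfe : f ψ = f ψ0
  · simp [hfe, htie hfψ hfe]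
  · rw [one_sub_mul_add_mul_nonpos_iff (hgap hfψ hfe)
      (abs_sub_le_of_nonneg_of_le (hg0 ψ) (hgC ψ) (hg0 ψ0) (hgC ψ0)) hhalf hsmall, sub_nonpos]

end Strength

/-- Proposition 6 (discrete case): if the posterior distribution of `RB` is discrete
near `RB(ψ₀)`, in the sense that (a) for some `δ > 0` the posterior probability of
`{ψ : 0 < |RB(ψ) − RB(ψ₀)| < δ}` is zero, and (b) the posterior probability of
`{ψ : RB(ψ) = RB(ψ₀) ∧ RB_Q(ψ) ≠ RB_Q(ψ₀)}` is zero, then the Gâteaux derivative of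
the strength at the base conditional prior in the direction `Q` is zero. -/
theorem gateaux_strength_conditional_discrete
    (P : Measure Ω) [IsProbabilityMeasure P]
    (f g : Ω → ℝ) (hf : Measurable f) (hg : Measurable g)
    (hf0 : ∀ ψ, 0 ≤ f ψ) (hg0 : ∀ ψ, 0 ≤ g ψ)
    (C : ℝ) (hfC : ∀ ψ, f ψ ≤ C) (hgC : ∀ ψ, g ψ ≤ C)
    (hm : 0 < ∫ x, f x ∂P) (hmQ : 0 < ∫ x, g x ∂P)
    (ψ0 : Ω)
    (ha : ∃ δ > (0 : ℝ),
      (∫ x in {ψ | f ψ / (∫ x, f x ∂P) ≠ f ψ0 / (∫ x, f x ∂P) ∧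
          |f ψ / (∫ x, f x ∂P) - f ψ0 / (∫ x, f x ∂P)| < δ}, f x ∂P) /
        (∫ x, f x ∂P) = 0)
    (hb : (∫ x in {ψ | f ψ / (∫ x, f x ∂P) = f ψ0 / (∫ x, f x ∂P) ∧
          g ψ / (∫ x, g x ∂P) ≠ g ψ0 / (∫ x, g x ∂P)}, f x ∂P) /
        (∫ x, f x ∂P) = 0) :
    Tendsto (fun ε : ℝ => (strength f g P ψ0 ε - strength f g P ψ0 0) / ε)
      (𝓝[≠] 0) (𝓝 0) := by
  obtain ⟨δ, hδ, ha⟩ := ha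
  have hfi : Integrable f P := Integrable.of_bound hf.aestronglyMeasurable C
    (ae_of_all _ fun ψ => by rw [Real.norm_of_nonneg (hf0 ψ)]; exact hfC ψ)
  have hA := ae_imp_eq_zero_of_setIntegral_eq_zero (by measurability) hf0 hfi.integrableOn
    ((div_eq_zero_iff.mp ha).resolve_right hm.ne')
  have hB := ae_imp_eq_zero_of_setIntegral_eq_zero (by measurability) hf0 hfi.integrableOn
    ((div_eq_zero_iff.mp hb).resolve_right hm.ne')
  have hgap : ∀ᵐ ψ ∂P, f ψ ≠ 0 → f ψ ≠ f ψ0 → δ * ∫ x, f x ∂P ≤ |f ψ - f ψ0| := by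
    filter_upwards [hA] with ψ hA hfψ hfe
    simpa [div_left_inj' hm.ne', hfe, ← sub_div, abs_div, abs_of_pos hm, le_div_iff₀ hm]
      using mt hA hfψ
  have htie : ∀ᵐ ψ ∂P, f ψ ≠ 0 → f ψ = f ψ0 → g ψ = g ψ0 := by
    filter_upwards [hB] with ψ hB hfψ hfe
    simpa [div_left_inj' hm.ne', div_left_inj' hmQ.ne', hfe] using mt hB hfψ
  have hS : HasDerivAt (strength f g P ψ0) 0 0 :=
    (hasDerivAt_const 0 (strength f g P ψ0 0)).congr_of_eventuallyEq
      (strength_eventually_eq hf hg hg0 hgC hm (mul_pos hδ hm) hgap htie)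
  simpa [slope_fun_def_field] using hS.tendsto_slope
end

section
/- (Sandwich bounds in the proof of Proposition 6) Fix ψ_0 ∈ Ψ and define the strength S_ε := Π({ψ : RB_ε(ψ) ≤ RB_ε(ψ_0)} | x), where Π(A|x) := (∫_A f dΠ)/m is the base posterior. Then: for every ε ∈ (0,1) (so that ε_x ∈ (0,1)), S_ε ≤ Π({ψ : RB(ψ) ≤ RB(ψ_0) + (ε_x/(1−ε_x)) RB_Q(ψ_0)} | x); and for every ε < 0 with m_ε > 0 (so that ε_x < 0), S_ε ≥ Π({ψ : RB(ψ) ≤ RB(ψ_0) + (ε_x/(1−ε_x)) RB_Q(ψ_0)} | x). -/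
open MeasureTheory Set Filter Topology

variable {Ω : Type*} [MeasurableSpace Ω]

/-! The set `{RB_ε ≤ RB_ε(ψ₀)}` is `{(1-ε)f(ψ) + εg(ψ) ≤ (1-ε)f(ψ₀) + εg(ψ₀)}`, and since
`ε_x/(1-ε_x) = εm_Q/((1-ε)m)` the comparison set is `{(1-ε)f(ψ) ≤ (1-ε)f(ψ₀) + εg(ψ₀)}`.
As `g ≥ 0`, the extra term `εg(ψ)` has the sign of `ε`, so one set contains the other, and the
base posterior is monotone in the set. -/

lemma contamination_odds_eq {m mQ ε : ℝ} (hmε : (1 - ε) * m + ε * mQ ≠ 0) :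
    ε * mQ / ((1 - ε) * m + ε * mQ) / (1 - ε * mQ / ((1 - ε) * m + ε * mQ)) =
      ε * mQ / ((1 - ε) * m) := by
  have hcompl : 1 - ε * mQ / ((1 - ε) * m + ε * mQ) = (1 - ε) * m / ((1 - ε) * m + ε * mQ) := by
    field_simp
    ring
  rw [hcompl, div_div_div_cancel_right₀ hmε]

lemma div_le_div_add_contamination_odds_mul_iff {m mQ ε x y z : ℝ} (hm : 0 < m) (hmQ : mQ ≠ 0)
    (hε : ε < 1) (hmε : (1 - ε) * m + ε * mQ ≠ 0) :
    x / m ≤ y / m + ε * mQ / ((1 - ε) * m + ε * mQ) /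
        (1 - ε * mQ / ((1 - ε) * m + ε * mQ)) * (z / mQ) ↔
      (1 - ε) * x ≤ (1 - ε) * y + ε * z := by
  have hε' : 0 < 1 - ε := sub_pos.mpr hε
  rw [contamination_odds_eq hmε,
    show y / m + ε * mQ / ((1 - ε) * m) * (z / mQ) = ((1 - ε) * y + ε * z) / ((1 - ε) * m) by
      field_simp,
    ← mul_div_mul_left x m hε'.ne']
  exact div_le_div_iff_of_pos_right (mul_pos hε' hm)

section

variable {f g : Ω → ℝ} {P : Measure Ω}

lemma rbc_le_rbc_iff {ε : ℝ} (hmε : 0 < (1 - ε) * (∫ x, f x ∂P) + ε * (∫ x, g x ∂P))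
    (ψ ψ0 : Ω) :
    RBc f g P ε ψ ≤ RBc f g P ε ψ0 ↔ (1 - ε) * f ψ + ε * g ψ ≤ (1 - ε) * f ψ0 + ε * g ψ0 :=
  div_le_div_iff_of_pos_right hmε

lemma setIntegral_div_integral_mono_set (hf0 : ∀ ψ, 0 ≤ f ψ) (hm : 0 < ∫ x, f x ∂P)
    {s t : Set Ω} (hst : s ⊆ t) :
    (∫ x in s, f x ∂P) / (∫ x, f x ∂P) ≤ (∫ x in t, f x ∂P) / (∫ x, f x ∂P) :=
  div_le_div_of_nonneg_right
    (setIntegral_mono_set (Integrable.of_integral_ne_zero hm.ne').integrableOn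
      (ae_of_all _ hf0) hst.eventuallyLE) hm.le

end

theorem strength_sandwich_bounds_general
    (P : Measure Ω)
    (f g : Ω → ℝ)
    (hf0 : ∀ ψ, 0 ≤ f ψ) (hg0 : ∀ ψ, 0 ≤ g ψ)
    (hm : 0 < ∫ x, f x ∂P) (hmQ : 0 < ∫ x, g x ∂P)
    (ψ0 : Ω) :
    (∀ ε : ℝ, ε ∈ Set.Ioo (0 : ℝ) 1 →
      strength f g P ψ0 ε ≤
        (∫ x in {ψ | f ψ / (∫ x, f x ∂P) ≤ f ψ0 / (∫ x, f x ∂P) +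
            (ε * (∫ x, g x ∂P) / ((1 - ε) * (∫ x, f x ∂P) + ε * (∫ x, g x ∂P)) /
              (1 - ε * (∫ x, g x ∂P) /
                ((1 - ε) * (∫ x, f x ∂P) + ε * (∫ x, g x ∂P)))) *
            (g ψ0 / ∫ x, g x ∂P)}, f x ∂P) / ∫ x, f x ∂P) ∧
    (∀ ε : ℝ, ε < 0 → 0 < (1 - ε) * (∫ x, f x ∂P) + ε * (∫ x, g x ∂P) →
      (∫ x in {ψ | f ψ / (∫ x, f x ∂P) ≤ f ψ0 / (∫ x, f x ∂P) +
            (ε * (∫ x, g x ∂P) / ((1 - ε) * (∫ x, f x ∂P) + ε * (∫ x, g x ∂P)) /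
              (1 - ε * (∫ x, g x ∂P) /
                ((1 - ε) * (∫ x, f x ∂P) + ε * (∫ x, g x ∂P)))) *
            (g ψ0 / ∫ x, g x ∂P)}, f x ∂P) / (∫ x, f x ∂P) ≤
        strength f g P ψ0 ε) := by
  constructor
  · rintro ε ⟨hε0, hε1⟩
    have hmε : 0 < (1 - ε) * (∫ x, f x ∂P) + ε * (∫ x, g x ∂P) := by
      have : 0 < 1 - ε := sub_pos.mpr hε1
      positivity
    refine setIntegral_div_integral_mono_set hf0 hm fun ψ hψ => ?_
    rw [mem_ofPred_eq, rbc_le_rbc_iff hmε] at hψ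
    rw [mem_ofPred_eq, div_le_div_add_contamination_odds_mul_iff hm hmQ.ne' hε1 hmε.ne']
    linarith [mul_nonneg hε0.le (hg0 ψ)]
  · intro ε hε0 hmε
    refine setIntegral_div_integral_mono_set hf0 hm fun ψ hψ => ?_
    rw [mem_ofPred_eq, div_le_div_add_contamination_odds_mul_iff hm hmQ.ne'
      (hε0.trans one_pos) hmε.ne'] at hψ
    rw [mem_ofPred_eq, rbc_le_rbc_iff hmε]
    linarith [mul_nonpos_of_nonpos_of_nonneg hε0.le (hg0 ψ)]

/-- Sandwich bounds in the proof of Proposition 6: with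
`ε_x = εm_Q/m_ε ` (where `m_ε = (1−ε)m + εm_Q`), for `ε ∈ (0,1)` the strength satisfies
`S_ε ≤ Π({ψ : RB(ψ) ≤ RB(ψ₀) + (ε_x/(1−ε_x))RB_Q(ψ₀)}|x)`, while for `ε < 0` with
`m_ε > 0` the reverse inequality holds. -/
theorem strength_sandwich_bounds
    (P : Measure Ω) [IsProbabilityMeasure P]
    (f g : Ω → ℝ) (hf : Measurable f) (hg : Measurable g)
    (hf0 : ∀ ψ, 0 ≤ f ψ) (hg0 : ∀ ψ, 0 ≤ g ψ)
    (C : ℝ) (hfC : ∀ ψ, f ψ ≤ C) (hgC : ∀ ψ, g ψ ≤ C)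
    (hm : 0 < ∫ x, f x ∂P) (hmQ : 0 < ∫ x, g x ∂P)
    (ψ0 : Ω) :
    (∀ ε : ℝ, ε ∈ Set.Ioo (0 : ℝ) 1 →
      strength f g P ψ0 ε ≤
        (∫ x in {ψ | f ψ / (∫ x, f x ∂P) ≤ f ψ0 / (∫ x, f x ∂P) +
            (ε * (∫ x, g x ∂P) / ((1 - ε) * (∫ x, f x ∂P) + ε * (∫ x, g x ∂P)) /
              (1 - ε * (∫ x, g x ∂P) /
                ((1 - ε) * (∫ x, f x ∂P) + ε * (∫ x, g x ∂P)))) *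
            (g ψ0 / ∫ x, g x ∂P)}, f x ∂P) / ∫ x, f x ∂P) ∧
    (∀ ε : ℝ, ε < 0 → 0 < (1 - ε) * (∫ x, f x ∂P) + ε * (∫ x, g x ∂P) →
      (∫ x in {ψ | f ψ / (∫ x, f x ∂P) ≤ f ψ0 / (∫ x, f x ∂P) +
            (ε * (∫ x, g x ∂P) / ((1 - ε) * (∫ x, f x ∂P) + ε * (∫ x, g x ∂P)) /
              (1 - ε * (∫ x, g x ∂P) /
                ((1 - ε) * (∫ x, f x ∂P) + ε * (∫ x, g x ∂P)))) *
            (g ψ0 / ∫ x, g x ∂P)}, f x ∂P) / (∫ x, f x ∂P) ≤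
        strength f g P ψ0 ε) :=
  strength_sandwich_bounds_general P f g hf0 hg0 hm hmQ ψ0
end

section
/- (Proposition 7) For every θ_0 ∈ Θ with π(θ_0) > 0, the Gâteaux derivative of the relative belief ratio at the base prior in the direction Q exists and equals lim_{ε→0} (RB_ε(θ_0) − RB(θ_0))/ε = (m_Q/m)(RB_Q(θ_0) − RB(θ_0)), where RB(θ) := L(θ)/m and RB_Q(θ) := q(θ)L(θ)/(π(θ) m_Q). -/
/-!
Once `θ₀` is fixed, `m` and `m_Q` are just positive numbers, so `ε ↦ RB_ε(θ₀)` is the constant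
`L(θ₀)/π(θ₀)` times the quotient of the two affine functions `(1-ε)π(θ₀) + εq(θ₀)` and
`(1-ε)m + εm_Q`. The Gâteaux derivative is the ordinary derivative of this quotient at `ε = 0`,
given by the quotient rule.
-/

open MeasureTheory Filter Topology

theorem hasDerivAt_mix (a b x : ℝ) : HasDerivAt (fun ε : ℝ => (1 - ε) * a + ε * b) (b - a) x :=
  ((((hasDerivAt_id' x).const_sub 1).mul_const a).add
    ((hasDerivAt_id' x).mul_const b)).congr_deriv (by ring)

theorem hasDerivAt_mix_div_mix (a b c d : ℝ) (hc : c ≠ 0) :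
    HasDerivAt (fun ε : ℝ => ((1 - ε) * a + ε * b) / ((1 - ε) * c + ε * d))
      ((b * c - a * d) / c ^ 2) 0 :=
  ((hasDerivAt_mix a b 0).div (hasDerivAt_mix c d 0) (by simpa using hc)).congr_deriv
    (by simp only [sub_zero, one_mul, zero_mul, add_zero]; ring)

theorem tendsto_slope_relativeBelief_mix (a b l m mQ : ℝ) (ha : a ≠ 0) (hm : m ≠ 0)
    (hmQ : mQ ≠ 0) :
    Tendsto (fun ε : ℝ => (((1 - ε) * a + ε * b) * l / (((1 - ε) * m + ε * mQ) * a) - l / m) / ε)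
      (𝓝[≠] 0) (𝓝 (mQ / m * (b * l / (a * mQ) - l / m))) := by
  have hderiv := (hasDerivAt_mix_div_mix a b m mQ hm).const_mul (l / a)
  rw [hasDerivAt_iff_tendsto_slope_zero] at hderiv
  have hbase : l / a * (((1 - 0) * a + 0 * b) / ((1 - 0) * m + 0 * mQ)) = l / m := by
    simp only [sub_zero, one_mul, zero_mul, add_zero]
    field_simp
  convert hderiv using 2 with ε
  · rw [hbase, zero_add, smul_eq_mul, div_eq_inv_mul _ ε]
    -- the identity also holds where the denominator vanishes (both sides use `x / 0 = 0`)
    generalize (1 - ε) * m + ε * mQ = D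
    field_simp
  · field_simp

theorem gateaux_relative_belief_general_general
    {Θ : Type*} [MeasurableSpace Θ] (ν : Measure Θ)
    (p q : Θ → ℝ)
    (L : Θ → ℝ)
    (hm : 0 < ∫ θ, L θ * p θ ∂ν) (hmQ : 0 < ∫ θ, L θ * q θ ∂ν)
    (θ0 : Θ) (hθ0 : 0 < p θ0) :
    Tendsto (fun ε : ℝ =>
        (((1 - ε) * p θ0 + ε * q θ0) * L θ0 /
            (((1 - ε) * (∫ θ, L θ * p θ ∂ν) + ε * (∫ θ, L θ * q θ ∂ν)) * p θ0) -
          L θ0 / ∫ θ, L θ * p θ ∂ν) / ε)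
      (𝓝[≠] 0)
      (𝓝 (((∫ θ, L θ * q θ ∂ν) / ∫ θ, L θ * p θ ∂ν) *
        (q θ0 * L θ0 / (p θ0 * ∫ θ, L θ * q θ ∂ν) -
          L θ0 / ∫ θ, L θ * p θ ∂ν))) :=
  tendsto_slope_relativeBelief_mix _ _ _ _ _ hθ0.ne' hm.ne' hmQ.ne'

/-- Proposition 7: for a general perturbation `(1−ε)π + εq` of the full prior density,
the Gâteaux derivative of the relative belief ratio
`RB_ε(θ) = π_ε(θ|x)/π(θ) = ((1−ε)π(θ) + εq(θ))L(θ)/(((1−ε)m + εm_Q)π(θ))`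
at the base prior in the direction `Q` exists and equals
`lim_{ε→0} (RB_ε(θ₀) − RB(θ₀))/ε = (m_Q/m)(RB_Q(θ₀) − RB(θ₀))`, where
`RB(θ) = L(θ)/m` and `RB_Q(θ) = q(θ)L(θ)/(π(θ)m_Q)`. -/
theorem gateaux_relative_belief_general
    {Θ : Type*} [MeasurableSpace Θ] (ν : Measure Θ) [SigmaFinite ν]
    (p q : Θ → ℝ) (hp : Measurable p) (hq : Measurable q)
    (hp0 : ∀ θ, 0 ≤ p θ) (hq0 : ∀ θ, 0 ≤ q θ)
    (hp1 : ∫ θ, p θ ∂ν = 1) (hq1 : ∫ θ, q θ ∂ν = 1)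
    (L : Θ → ℝ) (hL : Measurable L) (hL0 : ∀ θ, 0 ≤ L θ)
    (C : ℝ) (hLC : ∀ θ, L θ ≤ C)
    (hm : 0 < ∫ θ, L θ * p θ ∂ν) (hmQ : 0 < ∫ θ, L θ * q θ ∂ν)
    (θ0 : Θ) (hθ0 : 0 < p θ0) :
    Tendsto (fun ε : ℝ =>
        (((1 - ε) * p θ0 + ε * q θ0) * L θ0 /
            (((1 - ε) * (∫ θ, L θ * p θ ∂ν) + ε * (∫ θ, L θ * q θ ∂ν)) * p θ0) -
          L θ0 / ∫ θ, L θ * p θ ∂ν) / ε)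
      (𝓝[≠] 0)
      (𝓝 (((∫ θ, L θ * q θ ∂ν) / ∫ θ, L θ * p θ ∂ν) *
        (q θ0 * L θ0 / (p θ0 * ∫ θ, L θ * q θ ∂ν) -
          L θ0 / ∫ θ, L θ * p θ ∂ν))) :=
  gateaux_relative_belief_general_general ν p q L hm hmQ θ0 hθ0
end

section
/- (Example 2, worst-case ratio for the Bernoulli model) Let n ≥ 1 and 0 ≤ t ≤ n be natural numbers and α_0, β_0 > 0. Let L(θ) := C(n,t) θ^t (1−θ)^{n−t} for θ ∈ [0,1] (with the convention 0^0 = 1), and let Π be the Beta(α_0,β_0) distribution on [0,1], i.e. the probability measure with density θ ↦ θ^{α_0−1}(1−θ)^{β_0−1} Γ(α_0+β_0)/(Γ(α_0)Γ(β_0)) with respect to Lebesgue measure on (0,1). Then the supremum, over all probability measures Q on [0,1], of (∫ L dQ)/(∫ L dΠ) equals [Γ(α_0)Γ(β_0)/Γ(α_0+β_0)] · [Γ(n+α_0+β_0)/(Γ(t+α_0)Γ(n−t+β_0))] · (t/n)^t (1 − t/n)^{n−t}. -/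
/-!
The likelihood `θ ^ t * (1 - θ) ^ (n - t)` is maximised on `[0, 1]` at `θ = t / n` (weighted
AM–GM), so the supremum of `∫ L dQ` over probability measures `Q` is attained at the Dirac mass
at `t / n`. The denominator is a moment of the Beta distribution: `θ ^ k * (1 - θ) ^ m` times the
`Beta(α, β)` density is `B(α + k, β + m) / B(α, β)` times the `Beta(α + k, β + m)` density,
which integrates to one.
-/

open MeasureTheory Set ProbabilityTheory

namespace ProbabilityTheory

variable {α β : ℝ}

lemma betaPDFReal_nonneg (hα : 0 < α) (hβ : 0 < β) (x : ℝ) : 0 ≤ betaPDFReal α β x := by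
  by_cases hx : 0 < x ∧ x < 1
  · exact (betaPDFReal_pos hx.1 hx.2 hα hβ).le
  · simp [betaPDFReal, hx]

lemma integral_betaMeasure (hα : 0 < α) (hβ : 0 < β) (f : ℝ → ℝ) :
    ∫ x, f x ∂betaMeasure α β = ∫ x, betaPDFReal α β x * f x := by
  have hmeas : Measurable (betaPDF α β) := (measurable_betaPDFReal α β).ennreal_ofReal
  rw [betaMeasure, integral_withDensity_eq_integral_toReal_smul hmeas
    (ae_of_all _ fun _ => ENNReal.ofReal_lt_top)]
  simp only [betaPDF, ENNReal.toReal_ofReal (betaPDFReal_nonneg hα hβ _), smul_eq_mul]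

lemma integral_betaPDFReal (hα : 0 < α) (hβ : 0 < β) : ∫ x, betaPDFReal α β x = 1 := by
  have := isProbabilityMeasureBeta hα hβ
  simpa using (integral_betaMeasure hα hβ fun _ => 1).symm

lemma betaPDFReal_mul_pow_mul_one_sub_pow (hα : 0 < α) (hβ : 0 < β) (k m : ℕ) (x : ℝ) :
    betaPDFReal α β x * (x ^ k * (1 - x) ^ m) =
      beta (α + k) (β + m) / beta α β * betaPDFReal (α + k) (β + m) x := by
  unfold betaPDFReal
  split_ifs with hx
  · have hB := (beta_pos hα hβ).ne'
    have hB' := (beta_pos (α := α + k) (β := β + m) (by positivity) (by positivity)).ne'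
    rw [show α + k - 1 = (α - 1) + k by ring, show β + m - 1 = (β - 1) + m by ring,
      Real.rpow_add hx.1, Real.rpow_add (sub_pos.2 hx.2), Real.rpow_natCast, Real.rpow_natCast]
    field_simp
  · simp

lemma betaMeasure_eq_withDensity (α β : ℝ) :
    betaMeasure α β = volume.withDensity (fun θ => ENNReal.ofReal
      (if θ ∈ Ioo (0 : ℝ) 1 then
        θ ^ (α - 1) * (1 - θ) ^ (β - 1) * Real.Gamma (α + β) / (Real.Gamma α * Real.Gamma β)
      else 0)) := by
  rw [betaMeasure]
  congr with θ
  simp only [betaPDF, betaPDFReal, mem_Ioo, beta, one_div_div]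
  congr 1
  split_ifs <;> ring

lemma integral_pow_mul_one_sub_pow_betaMeasure (hα : 0 < α) (hβ : 0 < β) (k m : ℕ) :
    ∫ x, x ^ k * (1 - x) ^ m ∂betaMeasure α β = beta (α + k) (β + m) / beta α β := by
  simp_rw [integral_betaMeasure hα hβ, betaPDFReal_mul_pow_mul_one_sub_pow hα hβ]
  rw [integral_const_mul, integral_betaPDFReal (by positivity) (by positivity), mul_one]

end ProbabilityTheory

namespace MeasureTheory.ProbabilityMeasure

lemma iSup_integral_eq_of_forall_le {X : Type*} [MeasurableSpace X] [MeasurableSingletonClass X]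
    {f : X → ℝ} {x₀ : X} (hf_nonneg : ∀ x, 0 ≤ f x) (hf_le : ∀ x, f x ≤ f x₀) :
    ⨆ Q : ProbabilityMeasure X, ∫ x, f x ∂(Q : Measure X) = f x₀ := by
  have hle (Q : ProbabilityMeasure X) : ∫ x, f x ∂(Q : Measure X) ≤ f x₀ := by
    have := norm_integral_le_of_norm_le_const (μ := (Q : Measure X))
      (ae_of_all _ fun x => (Real.norm_of_nonneg (hf_nonneg x)).trans_le (hf_le x))
    simpa using (le_abs_self _).trans this
  let δ : ProbabilityMeasure X := ⟨Measure.dirac x₀, inferInstance⟩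
  have : Nonempty (ProbabilityMeasure X) := ⟨δ⟩
  refine le_antisymm (ciSup_le hle) (le_ciSup_of_le ⟨f x₀, ?_⟩ δ ?_)
  · rintro _ ⟨Q, rfl⟩
    exact hle Q
  · simp [δ, integral_dirac]

end MeasureTheory.ProbabilityMeasure

lemma rpow_mul_one_sub_rpow_le {a θ : ℝ} (ha : a ∈ Ioo 0 1) (hθ : θ ∈ Icc 0 1) :
    θ ^ a * (1 - θ) ^ (1 - a) ≤ a ^ a * (1 - a) ^ (1 - a) := by
  obtain ⟨ha0, ha1⟩ := ha
  have hb0 : 0 < 1 - a := sub_pos.2 ha1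
  have hθ' : 0 ≤ 1 - θ := sub_nonneg.2 hθ.2
  have amgm := Real.geom_mean_le_arith_mean2_weighted ha0.le hb0.le
    (div_nonneg hθ.1 ha0.le) (div_nonneg hθ' hb0.le) (add_sub_cancel a 1)
  rw [mul_div_cancel₀ _ ha0.ne', mul_div_cancel₀ _ hb0.ne', add_sub_cancel,
    Real.div_rpow hθ.1 ha0.le, Real.div_rpow hθ' hb0.le, div_mul_div_comm,
    div_le_one (by positivity)] at amgm
  exact amgm

lemma pow_mul_one_sub_pow_le {n t : ℕ} (ht : t ≤ n) {θ : ℝ} (hθ : θ ∈ Icc 0 1) :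
    θ ^ t * (1 - θ) ^ (n - t) ≤ ((t : ℝ) / n) ^ t * (1 - (t : ℝ) / n) ^ (n - t) := by
  have hθ' : 0 ≤ 1 - θ := sub_nonneg.2 hθ.2
  rcases Nat.eq_zero_or_pos t with rfl | ht0
  · simpa using pow_le_one₀ hθ' (by linarith [hθ.1])
  rcases ht.eq_or_lt with rfl | htn
  · have hn : (t : ℝ) ≠ 0 := by positivity
    simpa [div_self hn] using pow_le_one₀ hθ.1 hθ.2
  have hn : (0 : ℝ) < n := by exact_mod_cast ht0.trans htn
  have ha : (t : ℝ) / n ∈ Ioo 0 1 :=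
    ⟨by positivity, (div_lt_one hn).2 (by exact_mod_cast htn)⟩
  have hpow {x y : ℝ} (hx : 0 ≤ x) (hy : 0 ≤ y) :
      (x ^ ((t : ℝ) / n) * y ^ (1 - (t : ℝ) / n)) ^ (n : ℝ) = x ^ t * y ^ (n - t) := by
    rw [Real.mul_rpow (by positivity) (by positivity), ← Real.rpow_mul hx, ← Real.rpow_mul hy,
      div_mul_cancel₀ _ hn.ne', one_sub_mul, div_mul_cancel₀ _ hn.ne', ← Nat.cast_sub ht,
      Real.rpow_natCast, Real.rpow_natCast]
  rw [← hpow hθ.1 hθ', ← hpow ha.1.le (sub_pos.2 ha.2).le]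
  exact Real.rpow_le_rpow (mul_nonneg (Real.rpow_nonneg hθ.1 _) (Real.rpow_nonneg hθ' _))
    (rpow_mul_one_sub_rpow_le ha hθ) hn.le

theorem bernoulli_worst_case_ratio_general
    (n t : ℕ) (ht : t ≤ n)
    (α0 β0 : ℝ) (hα : 0 < α0) (hβ : 0 < β0)
    (L : ℝ → ℝ) (hL : ∀ θ, L θ = (n.choose t : ℝ) * θ ^ t * (1 - θ) ^ (n - t))
    (P : Measure ℝ)
    (hP : P = MeasureTheory.volume.withDensity (fun θ => ENNReal.ofReal
      (if θ ∈ Set.Ioo (0 : ℝ) 1 then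
        θ ^ (α0 - 1) * (1 - θ) ^ (β0 - 1) * Real.Gamma (α0 + β0) /
          (Real.Gamma α0 * Real.Gamma β0)
      else 0))) :
    (⨆ Q : ProbabilityMeasure (Set.Icc (0 : ℝ) 1),
        (∫ θ : Set.Icc (0 : ℝ) 1, L (θ : ℝ) ∂(Q : Measure (Set.Icc (0 : ℝ) 1))) /
          ∫ θ, L θ ∂P) =
      (Real.Gamma α0 * Real.Gamma β0 / Real.Gamma (α0 + β0)) *
        (Real.Gamma ((n : ℝ) + α0 + β0) /
          (Real.Gamma ((t : ℝ) + α0) * Real.Gamma ((n : ℝ) - (t : ℝ) + β0))) *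
        ((t : ℝ) / (n : ℝ)) ^ t * (1 - (t : ℝ) / (n : ℝ)) ^ (n - t) := by
  have hC : (0 : ℝ) < n.choose t := by exact_mod_cast Nat.choose_pos ht
  have hP_beta : P = betaMeasure α0 β0 := by rw [hP, betaMeasure_eq_withDensity]
  have hL_eq : L = fun θ => (n.choose t : ℝ) * (θ ^ t * (1 - θ) ^ (n - t)) := by
    ext θ
    rw [hL, mul_assoc]
  have hmode : (t : ℝ) / n ∈ Icc (0 : ℝ) 1 :=
    ⟨by positivity, div_le_one_of_le₀ (by exact_mod_cast ht) (by positivity)⟩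
  have hsup :
      ⨆ Q : ProbabilityMeasure (Icc (0 : ℝ) 1),
        ∫ θ : Icc (0 : ℝ) 1, L θ ∂(Q : Measure _) =
        n.choose t * (((t : ℝ) / n) ^ t * (1 - (t : ℝ) / n) ^ (n - t)) := by
    rw [hL_eq]
    refine ProbabilityMeasure.iSup_integral_eq_of_forall_le
      (X := Icc (0 : ℝ) 1) (x₀ := ⟨_, hmode⟩)
      (fun θ => ?_) (fun θ => mul_le_mul_of_nonneg_left (pow_mul_one_sub_pow_le ht θ.2) hC.le)
    exact mul_nonneg hC.le (mul_nonneg (pow_nonneg θ.2.1 _) (pow_nonneg (sub_nonneg.2 θ.2.2) _))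
  have hmarginal :
      ∫ θ, L θ ∂P = n.choose t * (beta (α0 + t) (β0 + (n - t : ℕ)) / beta α0 β0) := by
    rw [hP_beta, hL_eq, integral_const_mul, integral_pow_mul_one_sub_pow_betaMeasure hα hβ]
  have hmarginal_pos : 0 < ∫ θ, L θ ∂P := by
    rw [hmarginal]
    have := beta_pos hα hβ
    have := beta_pos (α := α0 + t) (β := β0 + (n - t : ℕ)) (by positivity) (by positivity)
    positivity
  simp only [div_eq_mul_inv (∫ _, _ ∂_)]
  rw [← Real.iSup_mul_of_nonneg (inv_nonneg.2 hmarginal_pos.le), hsup, hmarginal, beta, beta,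
    Nat.cast_sub ht, show α0 + t + (β0 + (n - t)) = n + α0 + β0 by ring, add_comm α0,
    show β0 + (n - t) = n - t + β0 by ring]
  have := Real.Gamma_pos_of_pos (add_pos hα hβ)
  have := Real.Gamma_pos_of_pos hα
  have := Real.Gamma_pos_of_pos hβ
  field_simp

/-- Example 2 (Bernoulli model): with likelihood `L(θ) = C(n,t) θ^t (1−θ)^{n−t}` and
prior `Π = Beta(α₀, β₀)` (density `θ^{α₀−1}(1−θ)^{β₀−1}Γ(α₀+β₀)/(Γ(α₀)Γ(β₀))` with
respect to Lebesgue measure on `(0,1)`), the supremum over all probability measures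
`Q` on `[0,1]` of `(∫ L dQ)/(∫ L dΠ)` equals
`[Γ(α₀)Γ(β₀)/Γ(α₀+β₀)]·[Γ(n+α₀+β₀)/(Γ(t+α₀)Γ(n−t+β₀))]·(t/n)^t (1−t/n)^{n−t}`. -/
theorem bernoulli_worst_case_ratio
    (n t : ℕ) (hn : 1 ≤ n) (ht : t ≤ n)
    (α0 β0 : ℝ) (hα : 0 < α0) (hβ : 0 < β0)
    (L : ℝ → ℝ) (hL : ∀ θ, L θ = (n.choose t : ℝ) * θ ^ t * (1 - θ) ^ (n - t))
    (P : Measure ℝ)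
    (hP : P = MeasureTheory.volume.withDensity (fun θ => ENNReal.ofReal
      (if θ ∈ Set.Ioo (0 : ℝ) 1 then
        θ ^ (α0 - 1) * (1 - θ) ^ (β0 - 1) * Real.Gamma (α0 + β0) /
          (Real.Gamma α0 * Real.Gamma β0)
      else 0))) :
    (⨆ Q : ProbabilityMeasure (Set.Icc (0 : ℝ) 1),
        (∫ θ : Set.Icc (0 : ℝ) 1, L (θ : ℝ) ∂(Q : Measure (Set.Icc (0 : ℝ) 1))) /
          ∫ θ, L θ ∂P) =
      (Real.Gamma α0 * Real.Gamma β0 / Real.Gamma (α0 + β0)) *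
        (Real.Gamma ((n : ℝ) + α0 + β0) /
          (Real.Gamma ((t : ℝ) + α0) * Real.Gamma ((n : ℝ) - (t : ℝ) + β0))) *
        ((t : ℝ) / (n : ℝ)) ^ t * (1 - (t : ℝ) / (n : ℝ)) ^ (n - t) :=
  bernoulli_worst_case_ratio_general n t ht α0 β0 hα hβ L hL P hP
end
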